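/- arXiv:2508.10250 — 11 statements merged into one kernel-verified Lean document; each statement's English description precedes it below -/
import Mathlib

section
/- Let R be a ring, let t ≥ 1 be an integer, and let C and D' be m×n matrices over R such that ‖C‖₀ ≤ t² and such that for every index j, if the j-th column of C has at most t nonzero entries then the j-th column of D' is equal to the j-th column of C. Then every row of the matrix C − D' has strictly fewer than t nonzero entries; in particular, every row of C − D' is t-sparse. -/
/-
A column of `C` with more than `t` nonzero entries is "heavy". Outside the heavy columns
`D'` agrees with `C`, so every row of `C - D'` is supported on the heavy columns. Since the
column counts add up to `‖C‖₀ ≤ t²`, there are at most `t² / (t + 1) < t` heavy columns.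
-/

/- `matNnz M` is the number of nonzero entries `‖M‖₀` of a matrix `M`. -/
open Classical in
noncomputable def matNnz {R : Type*} [Zero R] {m n : ℕ}
    (M : Matrix (Fin m) (Fin n) R) : ℕ :=
  (Finset.univ.filter (fun p : Fin m × Fin n => M p.1 p.2 ≠ 0)).card

open Finset

open Classical in
theorem sum_card_filter_col_ne_zero_eq_matNnz {R : Type*} [Zero R] {m n : ℕ}
    (M : Matrix (Fin m) (Fin n) R) :
    ∑ j, (univ.filter (fun i => M i j ≠ 0)).card = matNnz M := by
  simp only [matNnz, card_filter]
  rw [Fintype.sum_prod_type_right]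

theorem card_filter_lt_of_sum_le_sq {ι : Type*} (s : Finset ι) (f : ι → ℕ) {t : ℕ}
    (ht : 1 ≤ t) (hf : ∑ j ∈ s, f j ≤ t ^ 2) :
    (s.filter (fun j => t < f j)).card < t := by
  have hheavy : (s.filter (fun j => t < f j)).card * (t + 1) ≤ t ^ 2 :=
    calc (s.filter (fun j => t < f j)).card * (t + 1)
        = (s.filter (fun j => t < f j)).card • (t + 1) := (smul_eq_mul _ _).symm
      _ ≤ ∑ j ∈ s.filter (fun j => t < f j), f j :=
          card_nsmul_le_sum _ _ _ fun j hj => (mem_filter.1 hj).2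
      _ ≤ ∑ j ∈ s, f j := sum_le_sum_of_subset (filter_subset _ _)
      _ ≤ t ^ 2 := hf
  nlinarith

open Classical in
theorem row_support_sub_subset_heavy_cols {R : Type*} [AddGroup R] {m n : ℕ} (t : ℕ)
    (C D' : Matrix (Fin m) (Fin n) R)
    (hD' : ∀ j : Fin n,
      (univ.filter (fun i : Fin m => C i j ≠ 0)).card ≤ t → ∀ i : Fin m, D' i j = C i j)
    (i : Fin m) :
    univ.filter (fun j => (C - D') i j ≠ 0) ⊆
      univ.filter (fun j => t < (univ.filter (fun i => C i j ≠ 0)).card) := by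
  intro j hj
  simp only [mem_filter, mem_univ, true_and] at hj ⊢
  by_contra hlight
  exact hj (by rw [Matrix.sub_apply, hD' j (not_lt.1 hlight) i, sub_self])

open Classical in
theorem rows_of_diff_sparse {R : Type*} [Ring R] {m n : ℕ} (t : ℕ) (ht : 1 ≤ t)
    (C D' : Matrix (Fin m) (Fin n) R) (hC : matNnz C ≤ t ^ 2)
    (hD' : ∀ j : Fin n,
      (Finset.univ.filter (fun i : Fin m => C i j ≠ 0)).card ≤ t →
      ∀ i : Fin m, D' i j = C i j) :
    ∀ i : Fin m,
      (Finset.univ.filter (fun j : Fin n => (C - D') i j ≠ 0)).card < t := by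
  intro i
  have hcols : ∑ j, (univ.filter (fun i => C i j ≠ 0)).card ≤ t ^ 2 :=
    (sum_card_filter_col_ne_zero_eq_matNnz C).trans_le hC
  exact (card_le_card (row_support_sub_subset_heavy_cols t C D' hD' i)).trans_lt
    (card_filter_lt_of_sum_le_sq univ _ ht hcols)
end

section
/- (Correctness of the two-pass output-sparse matrix multiplication reduction.) Let R be a ring, let t, m, n ≥ 1 be integers, let H be an m×n matrix over R, and let ℛ : Rᵐ → Rⁿ be a function such that ℛ(Hx) = x for every t-sparse vector x ∈ Rⁿ. Let A, B be n×n matrices over R with ‖AB‖₀ ≤ t², and write C := AB with columns c₁,…,cₙ. Let D' be the n×n matrix whose j-th column is ℛ(H·cⱼ), and let F' be the n×n matrix whose j-th column is ℛ(H·fⱼ), where fⱼ denotes the j-th column of the transpose (C − D')ᵀ. Then D' + (F')ᵀ = AB. -/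
open Matrix

/- `vecNnz x` is the number of nonzero entries `‖x‖₀` of a vector `x`. -/
open Classical in
noncomputable def vecNnz {R : Type*} [Zero R] {n : ℕ} (x : Fin n → R) : ℕ :=
  (Finset.univ.filter (fun i => x i ≠ 0)).card

/-! At most `t` columns of `C = AB` carry more than `t` nonzeros, since `‖C‖₀ ≤ t²`. The first
pass recovers every other column exactly, so every row of the residual `C - D'` is supported on
these at most `t` heavy columns; it is therefore `t`-sparse and the second pass recovers it
exactly, giving `F'ᵀ = C - D'`. -/

section Sparsity

variable {R : Type*} {m n : ℕ}

lemma vecNnz_le_card_of_support_subset [Zero R] {x : Fin n → R} {s : Finset (Fin n)}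
    (h : ∀ i, x i ≠ 0 → i ∈ s) : vecNnz x ≤ s.card := by
  classical
  unfold vecNnz
  convert Finset.card_le_card fun i hi => h i (Finset.mem_filter.mp hi).2

lemma matNnz_eq_sum_vecNnz_col [Zero R] (M : Matrix (Fin m) (Fin n) R) :
    matNnz M = ∑ j, vecNnz (fun i => M i j) := by
  classical
  unfold matNnz vecNnz
  simp only [Finset.card_filter]
  convert Fintype.sum_prod_type_right _

open Classical in
noncomputable def heavyCols [Zero R] (M : Matrix (Fin m) (Fin n) R) (t : ℕ) : Finset (Fin n) :=
  Finset.univ.filter fun j => t < vecNnz (fun i => M i j)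

lemma card_heavyCols_le [Zero R] {M : Matrix (Fin m) (Fin n) R} {t : ℕ}
    (hM : matNnz M ≤ t ^ 2) : (heavyCols M t).card ≤ t := by
  classical
  have hsum : (heavyCols M t).card * (t + 1) ≤ matNnz M :=
    calc (heavyCols M t).card * (t + 1) = ∑ _j ∈ heavyCols M t, (t + 1) := by
          rw [Finset.sum_const, smul_eq_mul]
      _ ≤ ∑ j ∈ heavyCols M t, vecNnz (fun i => M i j) :=
          Finset.sum_le_sum fun j hj => (Finset.mem_filter.mp hj).2
      _ ≤ ∑ j, vecNnz (fun i => M i j) :=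
          Finset.sum_le_sum_of_subset (Finset.subset_univ _)
      _ = matNnz M := (matNnz_eq_sum_vecNnz_col M).symm
  nlinarith

lemma vecNnz_row_sub_le [AddGroup R] {C D : Matrix (Fin m) (Fin n) R} {t : ℕ}
    (hC : matNnz C ≤ t ^ 2) (hD : ∀ j, vecNnz (fun i => C i j) ≤ t → ∀ i, D i j = C i j)
    (i : Fin m) : vecNnz ((C - D) i) ≤ t := by
  classical
  refine (vecNnz_le_card_of_support_subset fun j hj => ?_).trans (card_heavyCols_le hC)
  by_contra hlight
  have hsparse : vecNnz (fun i => C i j) ≤ t := by simpa [heavyCols] using hlight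
  exact hj (by rw [Matrix.sub_apply, hD j hsparse i, sub_self])

end Sparsity

theorem two_pass_osmm_correct_general {R : Type*} [Ring R] {m n t : ℕ}
    (H : Matrix (Fin m) (Fin n) R) (Rec : (Fin m → R) → (Fin n → R))
    (hRec : ∀ x : Fin n → R, vecNnz x ≤ t → Rec (H.mulVec x) = x)
    (A B : Matrix (Fin n) (Fin n) R) (hAB : matNnz (A * B) ≤ t ^ 2)
    (C D' F' : Matrix (Fin n) (Fin n) R) (hC : C = A * B)
    (hD' : ∀ (j i : Fin n), D' i j = Rec (H.mulVec (fun k => C k j)) i)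
    (hF' : ∀ (j i : Fin n), F' i j = Rec (H.mulVec (fun k => (C - D')ᵀ k j)) i) :
    D' + F'ᵀ = A * B := by
  subst hC
  have hlight : ∀ j, vecNnz (fun k => (A * B) k j) ≤ t → ∀ i, D' i j = (A * B) i j :=
    fun j hj i => by rw [hD' j i, hRec _ hj]
  have hresidual : F'ᵀ = A * B - D' := by
    ext i j
    exact (hF' i j).trans (congrFun (hRec _ (vecNnz_row_sub_le hAB hlight i)) j)
  rw [hresidual, add_sub_cancel]

theorem two_pass_osmm_correct {R : Type*} [Ring R] {m n t : ℕ}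
    (hm : 1 ≤ m) (hn : 1 ≤ n) (ht : 1 ≤ t)
    (H : Matrix (Fin m) (Fin n) R) (Rec : (Fin m → R) → (Fin n → R))
    (hRec : ∀ x : Fin n → R, vecNnz x ≤ t → Rec (H.mulVec x) = x)
    (A B : Matrix (Fin n) (Fin n) R) (hAB : matNnz (A * B) ≤ t ^ 2)
    (C D' F' : Matrix (Fin n) (Fin n) R) (hC : C = A * B)
    (hD' : ∀ (j i : Fin n), D' i j = Rec (H.mulVec (fun k => C k j)) i)
    (hF' : ∀ (j i : Fin n), F' i j = Rec (H.mulVec (fun k => (C - D')ᵀ k j)) i) :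
    D' + F'ᵀ = A * B :=
  two_pass_osmm_correct_general H Rec hRec A B hAB C D' F' hC hD' hF'
end

section
/- (Correctness of the iterative guess-and-check matrix multiplication reduction.) Let R be a ring and n ≥ 1. Suppose that for each integer t with 1 ≤ t, we are given an integer m_t ≥ 1, a matrix H_t ∈ R^{m_t × n}, and a function ℛ_t : R^{m_t} → Rⁿ such that ℛ_t(H_t x) = x for every x ∈ Rⁿ with at most t nonzero entries. Let A, B be n×n matrices over R and set C := AB with columns c₁,…,cₙ. Define recursively: J₀ := {1,…,n} and C'₀ an arbitrary n×n matrix over R; for i = 0, 1, …, ⌈log₂ n⌉, set t_i := 2ⁱ, for each j ∈ J_i set F_{i,j} := ℛ_{t_i}(H_{t_i}·cⱼ), set J_{i+1} := { j ∈ J_i : F_{i,j} ≠ cⱼ }, and let C'_{i+1} be the matrix whose j-th column equals F_{i,j} for j ∈ J_i \ J_{i+1} and equals the j-th column of C'_i otherwise. Then C'_{⌈log₂ n⌉ + 1} = AB. -/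
open Matrix

section GuessAndCheck

variable {ι V : Type*} {c : ι → V} {F G : ℕ → ι → V} {J : ℕ → Finset ι}

theorem guessAndCheck_apply_eq_of_notMem (hJ0 : ∀ j, j ∈ J 0)
    (hJ : ∀ i j, j ∈ J (i + 1) ↔ j ∈ J i ∧ F i j ≠ c j)
    (hupdate : ∀ i j, j ∈ J i → j ∉ J (i + 1) → G (i + 1) j = F i j)
    (hkeep : ∀ i j, j ∉ J i → G (i + 1) j = G i j) :
    ∀ i j, j ∉ J i → G i j = c j
  | 0, j, hj => absurd (hJ0 j) hj
  | i + 1, j, hj => by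
    by_cases hji : j ∈ J i
    · rw [hupdate i j hji hj]
      by_contra hne
      exact hj ((hJ i j).2 ⟨hji, hne⟩)
    · rw [hkeep i j hji]
      exact guessAndCheck_apply_eq_of_notMem hJ0 hJ hupdate hkeep i j hji

end GuessAndCheck

theorem vecNnz_le {R : Type*} [Zero R] {n : ℕ} (x : Fin n → R) : vecNnz x ≤ n := by
  unfold vecNnz
  exact (Finset.card_le_univ _).trans_eq (Fintype.card_fin n)

open Classical in
theorem guess_and_check_mm_correct_general {R : Type*} [Ring R] {n : ℕ}
    (m : ℕ → ℕ)
    (H : (t : ℕ) → Matrix (Fin (m t)) (Fin n) R)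
    (Rec : (t : ℕ) → (Fin (m t) → R) → (Fin n → R))
    (hRec : ∀ t, 1 ≤ t → ∀ x : Fin n → R, vecNnz x ≤ t →
      Rec t ((H t).mulVec x) = x)
    (A B C : Matrix (Fin n) (Fin n) R) (hC : C = A * B)
    (J : ℕ → Finset (Fin n)) (C' : ℕ → Matrix (Fin n) (Fin n) R)
    (hJ0 : J 0 = Finset.univ)
    (hJ : ∀ i : ℕ, J (i + 1) = (J i).filter (fun j =>
      Rec (2 ^ i) ((H (2 ^ i)).mulVec (fun k => C k j)) ≠ (fun k => C k j)))
    (hC' : ∀ i : ℕ, ∀ (i' j : Fin n), C' (i + 1) i' j =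
      if j ∈ J i ∧ j ∉ J (i + 1) then
        Rec (2 ^ i) ((H (2 ^ i)).mulVec (fun k => C k j)) i'
      else C' i i' j) :
    C' (Nat.clog 2 n + 1) = A * B := by
  set F : ℕ → Fin n → Fin n → R := fun i j => Rec (2 ^ i) ((H (2 ^ i)).mulVec (Cᵀ j))
  have hcol : ∀ i j, j ∉ J i → (C' i)ᵀ j = Cᵀ j :=
    guessAndCheck_apply_eq_of_notMem (F := F) (by simp [hJ0])
      (fun i j => by rw [hJ, Finset.mem_filter]; rfl)
      (fun i j hj hj' => funext fun k => by
        rw [transpose_apply, hC', if_pos ⟨hj, hj'⟩]; rfl)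
      (fun i j hj => funext fun k => by
        rw [transpose_apply, hC', if_neg fun h => hj h.1]; rfl)
  have hrecovered : ∀ j, F (Nat.clog 2 n) j = Cᵀ j := fun j =>
    hRec _ Nat.one_le_two_pow _ ((vecNnz_le _).trans (Nat.le_pow_clog one_lt_two n))
  have hempty : ∀ j, j ∉ J (Nat.clog 2 n + 1) := fun j hj => by
    rw [hJ, Finset.mem_filter] at hj
    exact hj.2 (hrecovered j)
  rw [← hC]
  ext k j
  exact congrFun (hcol _ j (hempty j)) k

open Classical in
theorem guess_and_check_mm_correct {R : Type*} [Ring R] {n : ℕ} (hn : 1 ≤ n)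
    (m : ℕ → ℕ) (hm : ∀ t, 1 ≤ m t)
    (H : (t : ℕ) → Matrix (Fin (m t)) (Fin n) R)
    (Rec : (t : ℕ) → (Fin (m t) → R) → (Fin n → R))
    (hRec : ∀ t, 1 ≤ t → ∀ x : Fin n → R, vecNnz x ≤ t →
      Rec t ((H t).mulVec x) = x)
    (A B C : Matrix (Fin n) (Fin n) R) (hC : C = A * B)
    (J : ℕ → Finset (Fin n)) (C' : ℕ → Matrix (Fin n) (Fin n) R)
    (hJ0 : J 0 = Finset.univ)
    (hJ : ∀ i : ℕ, J (i + 1) = (J i).filter (fun j =>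
      Rec (2 ^ i) ((H (2 ^ i)).mulVec (fun k => C k j)) ≠ (fun k => C k j)))
    (hC' : ∀ i : ℕ, ∀ (i' j : Fin n), C' (i + 1) i' j =
      if j ∈ J i ∧ j ∉ J (i + 1) then
        Rec (2 ^ i) ((H (2 ^ i)).mulVec (fun k => C k j)) i'
      else C' i i' j) :
    C' (Nat.clog 2 n + 1) = A * B :=
  guess_and_check_mm_correct_general m H Rec hRec A B C hC J C' hJ0 hJ hC'
end

section
/- Let R be a ring, m ≥ 1, and let y = (y₁,…,y_m) ∈ Rᵐ be a nonzero vector. Then the number of vectors x = (x₁,…,x_m) whose entries all lie in {0_R, 1_R} and which satisfy x₁y₁ + ⋯ + x_m y_m = 0 is at most 2^{m−1}. Equivalently, for x chosen uniformly at random from {0,1}ᵐ, the inner product ⟨x, y⟩ is nonzero with probability at least 1/2. -/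
/- Pick a coordinate `i` with `y i ≠ 0`. Flipping the `i`-th bit of `x` changes `⟨x, y⟩` by `± y i`,
so it maps the solutions of `⟨x, y⟩ = 0` injectively to non-solutions; hence at most half of the
`2^m` vectors are solutions. -/

open Finset Function

theorem Finset.two_mul_card_le_of_injOn_compl {α : Type*} [Fintype α] [DecidableEq α]
    {s : Finset α} (f : α → α) (hf : ∀ a ∈ s, f a ∉ s) (hinj : Set.InjOn f s) :
    2 * #s ≤ Fintype.card α := by
  have : #s ≤ #sᶜ := card_le_card_of_injOn f (fun a ha => mem_compl.2 (hf a ha)) hinj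
  have := card_le_univ s
  rw [card_compl] at *
  omega

section BoolInner

variable {ι R : Type*} [Fintype ι] [Ring R]

def boolInner (x : ι → Bool) (y : ι → R) : R :=
  ∑ j, (if x j then (1 : R) else 0) * y j

variable [DecidableEq ι]

theorem boolInner_update (x : ι → Bool) (y : ι → R) (i : ι) (b : Bool) :
    boolInner (update x i b) y =
      (if b then 1 else 0) * y i + ∑ j ∈ {i}ᶜ, (if x j then 1 else 0) * y j := by
  rw [boolInner, Fintype.sum_eq_add_sum_compl i, update_self]
  congr 1
  refine sum_congr rfl fun j hj => ?_
  rw [update_of_ne (by simpa using hj)]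

theorem boolInner_update_not_ne_zero {x : ι → Bool} {y : ι → R} {i : ι} (hi : y i ≠ 0)
    (hx : boolInner x y = 0) : boolInner (update x i (!x i)) y ≠ 0 := by
  intro hflip
  have hself : boolInner (update x i (x i)) y = 0 := by rwa [update_eq_self]
  rw [boolInner_update] at hself hflip
  have hsub := hflip.trans hself.symm
  cases hxi : x i <;> simp [hxi] at hsub <;> simp [hsub] at hi

end BoolInner

open Classical in
theorem freivalds_vector_bound_general {R : Type*} [Ring R] {m : ℕ}
    (y : Fin m → R) (hy : y ≠ 0) :
    (Finset.univ.filter (fun x : Fin m → Bool =>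
      ∑ i, (if x i then (1 : R) else 0) * y i = 0)).card ≤ 2 ^ (m - 1) := by
  obtain ⟨i, hi⟩ : ∃ i, y i ≠ 0 := by simpa [funext_iff] using hy
  have hflip : Involutive fun x : Fin m → Bool => update x i (!x i) := fun x => by simp
  have hhalf := two_mul_card_le_of_injOn_compl (s := univ.filter fun x => boolInner x y = 0)
    (fun x => update x i (!x i))
    (fun x hx hflipx => boolInner_update_not_ne_zero hi (mem_filter.1 hx).2 (mem_filter.1 hflipx).2)
    hflip.injective.injOn
  have hm : 2 ^ m = 2 * 2 ^ (m - 1) := by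
    rw [← pow_succ', Nat.sub_add_cancel i.pos]
  simp only [Fintype.card_fun, Fintype.card_bool, Fintype.card_fin, hm] at hhalf
  exact Nat.le_of_mul_le_mul_left hhalf two_pos

open Classical in
theorem freivalds_vector_bound {R : Type*} [Ring R] {m : ℕ} (hm : 1 ≤ m)
    (y : Fin m → R) (hy : y ≠ 0) :
    (Finset.univ.filter (fun x : Fin m → Bool =>
      ∑ i, (if x i then (1 : R) else 0) * y i = 0)).card ≤ 2 ^ (m - 1) :=
  freivalds_vector_bound_general y hy
end

section
/- Let R be a ring, m ≥ 1, N ≥ 1, and let y ∈ Rᵐ be a nonzero vector. Then the number of N×m matrices X all of whose entries lie in {0_R, 1_R} and which satisfy Xy = 0 (the zero vector of R^N) is at most 2^{Nm − N}. Equivalently, for X chosen uniformly at random from {0,1}^{N×m}, the probability that Xy = 0 is at most 2^{−N}. -/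
/-!
Pick `j` with `y j ≠ 0`. Negating the `j`-th entry of a row `v ∈ {0,1}^m` changes `v ⬝ y` by
`± y j`, so this involution maps the rows with `v ⬝ y = 0` into the rows with `v ⬝ y ≠ 0`.
Hence at most `2^(m-1)` rows are solutions, and the `N` rows of `X` are chosen independently.
-/

open Finset Function

theorem Finset.two_mul_card_le_of_mapsTo_compl {α : Type*} [Fintype α] {s : Finset α}
    (f : α ↪ α) (hf : ∀ a ∈ s, f a ∉ s) : 2 * #s ≤ Fintype.card α := by
  have hdisj : Disjoint s (s.map f) := by
    rw [Finset.disjoint_left]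
    rintro _ hfa ha
    obtain ⟨a, ha', rfl⟩ := mem_map.mp ha
    exact hf a ha' hfa
  refine (s.disjUnion _ hdisj).card_le_univ.trans_eq' ?_
  rw [Nat.two_mul, card_disjUnion, card_map]

theorem Function.involutive_update_not {ι : Type*} [DecidableEq ι] (j : ι) :
    Involutive fun v : ι → Bool => update v j (!v j) :=
  fun v => by simp

theorem sum_ite_update_eq_add_sum_erase {ι M : Type*} [Fintype ι] [DecidableEq ι]
    [AddCommMonoid M] (y : ι → M) (v : ι → Bool) (j : ι) (b : Bool) :
    ∑ i, (if update v j b i then y i else 0)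
      = (if b then y j else 0) + ∑ i ∈ univ.erase j, (if v i then y i else 0) := by
  rw [← add_sum_erase _ _ (mem_univ j), update_self]
  congr 1
  refine sum_congr rfl fun i hi => ?_
  rw [update_of_ne (ne_of_mem_erase hi)]

theorem card_filter_sum_ite_eq_zero_le {ι M : Type*} [Fintype ι] [DecidableEq ι]
    [AddCancelCommMonoid M] [DecidableEq M] {y : ι → M} (hy : y ≠ 0) :
    #{v : ι → Bool | ∑ i, (if v i then y i else 0) = 0} ≤ 2 ^ (Fintype.card ι - 1) := by
  obtain ⟨j, hj⟩ := Function.ne_iff.mp hy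
  set S : Finset (ι → Bool) := {v | ∑ i, (if v i then y i else 0) = 0}
  have hflip : ∀ v ∈ S, update v j (!v j) ∉ S := by
    intro v hv hv'
    simp only [S, mem_filter, mem_univ, true_and] at hv hv'
    rw [← update_eq_self j v, sum_ite_update_eq_add_sum_erase] at hv
    rw [sum_ite_update_eq_add_sum_erase] at hv'
    have hcoef := add_right_cancel (hv.trans hv'.symm)
    cases hb : v j <;> simp only [hb, Bool.not_false, Bool.not_true, if_true] at hcoef
    exacts [hj hcoef.symm, hj hcoef]
  have h2 := two_mul_card_le_of_mapsTo_compl ⟨_, (involutive_update_not j).injective⟩ hflip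
  have hι : 0 < Fintype.card ι := Fintype.card_pos_iff.mpr ⟨j⟩
  rw [Fintype.card_fun, Fintype.card_bool, ← Nat.pow_pred_mul hι] at h2
  omega

open Classical in
theorem freivalds_matrix_bound_general {R : Type*} [Ring R] {m N : ℕ}
    (y : Fin m → R) (hy : y ≠ 0) :
    (Finset.univ.filter (fun X : Fin N → Fin m → Bool =>
      ∀ k : Fin N, ∑ i, (if X k i then (1 : R) else 0) * y i = 0)).card
      ≤ 2 ^ (N * m - N) := by
  set S : Finset (Fin m → Bool) := {v | ∑ i, (if v i then y i else 0) = 0}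
  calc _ = #(Fintype.piFinset fun _ : Fin N => S) := by
        congr 1; ext X; simp [S, Fintype.mem_piFinset]
    _ = #S ^ N := by simp
    _ ≤ (2 ^ (m - 1)) ^ N := by
        simpa using Nat.pow_le_pow_left (card_filter_sum_ite_eq_zero_le hy) N
    _ = 2 ^ (N * m - N) := by rw [← pow_mul, Nat.sub_mul, one_mul, Nat.mul_comm]

open Classical in
theorem freivalds_matrix_bound {R : Type*} [Ring R] {m N : ℕ}
    (hm : 1 ≤ m) (hN : 1 ≤ N) (y : Fin m → R) (hy : y ≠ 0) :
    (Finset.univ.filter (fun X : Fin N → Fin m → Bool =>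
      ∀ k : Fin N, ∑ i, (if X k i then (1 : R) else 0) * y i = 0)).card
      ≤ 2 ^ (N * m - N) :=
  freivalds_matrix_bound_general y hy
end

section
/- (Correctness of Freivalds-style verification for Column-Wise-MMV.) Let R be a ring, let m, n, p, N ≥ 1, let A ∈ R^{m×n}, B ∈ R^{n×p}, C' ∈ R^{m×p}, and set M := AB − C' with columns M e₁,…,M e_p. For X chosen uniformly at random from the set {0,1}^{N×m} of N×m matrices with entries in {0_R, 1_R}, with probability at least 1 − p/2^N the following holds: for every j ∈ {1,…,p}, the j-th column of XM is nonzero if and only if the j-th column of AB differs from the j-th column of C'. Equivalently, the number of matrices X ∈ {0,1}^{N×m} for which there exists j with M eⱼ ≠ 0 but X(M eⱼ) = 0 is at most p·2^{Nm − N}. -/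
/-! Fix a column `v ≠ 0` with `v i₀ ≠ 0`. Flipping the `i₀`-th bit of a `0/1` vector `x` changes
`∑ xᵢ vᵢ` by `± v i₀ ≠ 0`, so flipping maps the zero set of `x ↦ ∑ xᵢ vᵢ` injectively into its
complement: at most half of the `0/1` vectors are orthogonal to `v`. The `N` rows of `X` are
independent, so at most a `2^(-N)` fraction of the `X` kill a given nonzero column, and a union
bound over the `p` columns finishes. -/

open Finset

theorem Finset.card_filter_exists_le {α β : Type*} [Fintype β] (s : Finset α) (P : β → α → Prop)
    [DecidablePred fun a => ∃ b, P b a] [∀ b, DecidablePred (P b)] :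
    #(s.filter fun a => ∃ b, P b a) ≤ ∑ b, #(s.filter (P b)) := by
  classical
  calc #(s.filter fun a => ∃ b, P b a) ≤ #(univ.biUnion fun b => s.filter (P b)) :=
        card_le_card fun a ha => by simpa using ha
    _ ≤ ∑ b, #(s.filter (P b)) := card_biUnion_le

section BoolDot

variable {R ι : Type*} [Ring R] [Fintype ι]

def boolDot (x : ι → Bool) (v : ι → R) : R :=
  ∑ i, (if x i then (1 : R) else 0) * v i

theorem boolDot_sub_boolDot_flip [DecidableEq ι] (x : ι → Bool) (v : ι → R) (i : ι) :
    boolDot x v - boolDot (Function.update x i (!x i)) v = if x i then v i else -v i := by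
  have h_rest : ∑ j ∈ {i}ᶜ, (if Function.update x i (!x i) j then (1 : R) else 0) * v j
      = ∑ j ∈ {i}ᶜ, (if x j then (1 : R) else 0) * v j :=
    sum_congr rfl fun j hj => by rw [Function.update_of_ne (by simpa using hj)]
  rw [boolDot, boolDot, Fintype.sum_eq_add_sum_compl i, Fintype.sum_eq_add_sum_compl i, h_rest,
    Function.update_self]
  cases x i <;> simp

open Classical in
theorem two_mul_card_boolDot_eq_zero_le {v : ι → R} (hv : v ≠ 0) :
    2 * #(univ.filter fun x : ι → Bool => boolDot x v = 0) ≤ 2 ^ Fintype.card ι := by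
  obtain ⟨i₀, hi₀⟩ : ∃ i, v i ≠ 0 := Function.ne_iff.mp hv
  set S := univ.filter fun x : ι → Bool => boolDot x v = 0
  set flip : (ι → Bool) → ι → Bool := fun x => Function.update x i₀ (!x i₀)
  have flip_involutive : Function.Involutive flip := fun x => by
    funext i
    rcases eq_or_ne i i₀ with rfl | hi
    · simp [flip]
    · simp [flip, Function.update_of_ne hi]
  have flip_not_mem : ∀ x ∈ S, flip x ∉ S := fun x hx hfx => by
    simp only [S, mem_filter, mem_univ, true_and] at hx hfx
    have h := boolDot_sub_boolDot_flip x v i₀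
    rw [hx, hfx, sub_zero] at h
    split_ifs at h <;> simp_all
  have h_disj : Disjoint S (S.image flip) := by
    rw [disjoint_right]
    rintro _ hy
    obtain ⟨x, hx, rfl⟩ := mem_image.mp hy
    exact flip_not_mem x hx
  calc 2 * #S = #S + #(S.image flip) := by
        rw [card_image_of_injective _ flip_involutive.injective]; ring
    _ = #(S ∪ S.image flip) := (card_union_of_disjoint h_disj).symm
    _ ≤ Fintype.card (ι → Bool) := card_le_univ _
    _ = 2 ^ Fintype.card ι := by simp

open Classical in
theorem card_boolDot_eq_zero_le {v : ι → R} (hv : v ≠ 0) :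
    #(univ.filter fun x : ι → Bool => boolDot x v = 0) ≤ 2 ^ (Fintype.card ι - 1) := by
  have h := two_mul_card_boolDot_eq_zero_le hv
  obtain ⟨i₀, -⟩ : ∃ i, v i ≠ 0 := Function.ne_iff.mp hv
  have h_pow : 2 ^ Fintype.card ι = 2 * 2 ^ (Fintype.card ι - 1) := by
    rw [← pow_succ', Nat.sub_add_cancel (Fintype.card_pos_iff.mpr ⟨i₀⟩)]
  omega

open Classical in
theorem card_forall_boolDot_eq_zero_le {κ : Type*} [Fintype κ] {v : ι → R}
    (hv : v ≠ 0) :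
    #(univ.filter fun X : κ → ι → Bool => ∀ k, boolDot (X k) v = 0)
      ≤ 2 ^ ((Fintype.card ι - 1) * Fintype.card κ) := by
  have h_pi : (univ.filter fun X : κ → ι → Bool => ∀ k, boolDot (X k) v = 0)
      = Fintype.piFinset fun _ => univ.filter fun x : ι → Bool => boolDot x v = 0 := by
    ext X
    simp
  rw [h_pi, Fintype.card_piFinset, prod_const, card_univ, pow_mul]
  exact Nat.pow_le_pow_left (card_boolDot_eq_zero_le hv) _

end BoolDot

open Classical in
theorem freivalds_colwise_mmv_general {R : Type*} [Ring R] {m p N : ℕ}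
    (M : Matrix (Fin m) (Fin p) R) :
    (Finset.univ.filter (fun X : Fin N → Fin m → Bool =>
      ∃ j : Fin p, (fun i : Fin m => M i j) ≠ 0 ∧
        ∀ k : Fin N, ∑ i, (if X k i then (1 : R) else 0) * M i j = 0)).card
      ≤ p * 2 ^ (N * m - N) := by
  have h_col : ∀ j : Fin p, #(univ.filter fun X : Fin N → Fin m → Bool =>
      (fun i => M i j) ≠ 0 ∧ ∀ k, boolDot (X k) (fun i => M i j) = 0) ≤ 2 ^ (N * m - N) := by
    intro j
    by_cases hj : (fun i => M i j) = 0
    · simp [hj]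
    · have h := card_forall_boolDot_eq_zero_le (κ := Fin N) hj
      rw [Fintype.card_fin, Fintype.card_fin, Nat.sub_one_mul, Nat.mul_comm m N] at h
      refine (card_le_card fun X hX => ?_).trans h
      simp only [mem_filter, mem_univ, true_and] at hX ⊢
      exact hX.2
  calc _ ≤ ∑ j : Fin p, #(univ.filter fun X : Fin N → Fin m → Bool =>
          (fun i => M i j) ≠ 0 ∧ ∀ k, boolDot (X k) (fun i => M i j) = 0) :=
        card_filter_exists_le _ _
    _ ≤ ∑ _j : Fin p, 2 ^ (N * m - N) := sum_le_sum fun j _ => h_col j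
    _ = p * 2 ^ (N * m - N) := by simp

open Classical in
theorem freivalds_colwise_mmv {R : Type*} [Ring R] {m n p N : ℕ}
    (hm : 1 ≤ m) (hn : 1 ≤ n) (hp : 1 ≤ p) (hN : 1 ≤ N)
    (A : Matrix (Fin m) (Fin n) R) (B : Matrix (Fin n) (Fin p) R)
    (C' : Matrix (Fin m) (Fin p) R)
    (M : Matrix (Fin m) (Fin p) R) (hM : M = A * B - C') :
    (Finset.univ.filter (fun X : Fin N → Fin m → Bool =>
      ∃ j : Fin p, (fun i : Fin m => M i j) ≠ 0 ∧
        ∀ k : Fin N, ∑ i, (if X k i then (1 : R) else 0) * M i j = 0)).card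
      ≤ p * 2 ^ (N * m - N) :=
  freivalds_colwise_mmv_general M
end

section
/- Let f be a real-valued function on triples of nonnegative real numbers satisfying: (i) positive homogeneity, f(λa, λb, λc) = λ·f(a, b, c) for all λ ≥ 0 and all nonnegative a, b, c; (ii) subadditivity, f(a+a', b+b', c+c') ≤ f(a, b, c) + f(a', b', c') for all nonnegative arguments; and (iii) invariance under permutations of its three arguments. Then for all α, β, γ ∈ [0, 1] with β + γ ≥ 1, one has f(α, β, γ) ≤ f(α, 1, β + γ − 1). -/
/-! Homogeneity and subadditivity make `f` convex, and symmetry in the last two arguments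
makes `f α 1 s` and `f α s 1` equal, where `s = β + γ - 1`. Since `(α, β, γ)` is the convex
combination `λ (α, 1, s) + (1 - λ) (α, s, 1)` with `λ = (1 - γ) / (2 - β - γ)`, convexity
gives the inequality. -/

section

variable (f : ℝ → ℝ → ℝ → ℝ)
  (hhom : ∀ l a b c : ℝ, 0 ≤ l → 0 ≤ a → 0 ≤ b → 0 ≤ c →
    f (l * a) (l * b) (l * c) = l * f a b c)
  (hsub : ∀ a a' b b' c c' : ℝ, 0 ≤ a → 0 ≤ a' → 0 ≤ b → 0 ≤ b' → 0 ≤ c → 0 ≤ c' →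
    f (a + a') (b + b') (c + c') ≤ f a b c + f a' b' c')

include hhom hsub in
theorem map_mul_add_mul_le {l m a a' b b' c c' : ℝ} (hl : 0 ≤ l) (hm : 0 ≤ m)
    (ha : 0 ≤ a) (ha' : 0 ≤ a') (hb : 0 ≤ b) (hb' : 0 ≤ b') (hc : 0 ≤ c) (hc' : 0 ≤ c') :
    f (l * a + m * a') (l * b + m * b') (l * c + m * c') ≤ l * f a b c + m * f a' b' c' := by
  rw [← hhom l a b c hl ha hb hc, ← hhom m a' b' c' hm ha' hb' hc']
  exact hsub _ _ _ _ _ _ (by positivity) (by positivity) (by positivity) (by positivity)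
    (by positivity) (by positivity)

include hhom hsub in
theorem map_symmetrize_le
    (hswap23 : ∀ a b c : ℝ, 0 ≤ a → 0 ≤ b → 0 ≤ c → f a b c = f a c b)
    {a s t l : ℝ} (ha : 0 ≤ a) (hs : 0 ≤ s) (ht : 0 ≤ t) (hl₀ : 0 ≤ l) (hl₁ : l ≤ 1) :
    f a (l * s + (1 - l) * t) (l * t + (1 - l) * s) ≤ f a s t :=
  calc f a (l * s + (1 - l) * t) (l * t + (1 - l) * s)
      = f (l * a + (1 - l) * a) (l * s + (1 - l) * t) (l * t + (1 - l) * s) := by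
        congr 1; ring
    _ ≤ l * f a s t + (1 - l) * f a t s :=
        map_mul_add_mul_le f hhom hsub hl₀ (by linarith) ha ha hs ht ht hs
    _ = f a s t := by rw [← hswap23 a s t ha hs ht]; ring

end

theorem rect_mm_exponent_ineq_general (f : ℝ → ℝ → ℝ → ℝ)
    (hhom : ∀ l a b c : ℝ, 0 ≤ l → 0 ≤ a → 0 ≤ b → 0 ≤ c →
      f (l * a) (l * b) (l * c) = l * f a b c)
    (hsub : ∀ a a' b b' c c' : ℝ, 0 ≤ a → 0 ≤ a' → 0 ≤ b → 0 ≤ b' → 0 ≤ c → 0 ≤ c' →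
      f (a + a') (b + b') (c + c') ≤ f a b c + f a' b' c')
    (hswap23 : ∀ a b c : ℝ, 0 ≤ a → 0 ≤ b → 0 ≤ c → f a b c = f a c b)
    (α β γ : ℝ) (hα : α ∈ Set.Icc (0 : ℝ) 1) (hβ : β ∈ Set.Icc (0 : ℝ) 1)
    (hγ : γ ∈ Set.Icc (0 : ℝ) 1) (hβγ : 1 ≤ β + γ) :
    f α β γ ≤ f α 1 (β + γ - 1) := by
  obtain ⟨hα₀, -⟩ := hα
  obtain ⟨hβ₀, hβ₁⟩ := hβ
  obtain ⟨hγ₀, hγ₁⟩ := hγ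
  set l := (1 - γ) / (2 - β - γ)
  have hl₀ : 0 ≤ l := div_nonneg (by linarith) (by linarith)
  have hl₁ : l ≤ 1 := div_le_one_of_le₀ (by linarith) (by linarith)
  -- At `β = γ = 1` the division is `0 / 0 = 0`, and `l = 0` still works.
  have hmix : l * (2 - β - γ) = 1 - γ := div_mul_cancel_of_imp fun h => by linarith
  have key := map_symmetrize_le f hhom hsub hswap23 hα₀ zero_le_one (by linarith : 0 ≤ β + γ - 1)
    hl₀ hl₁
  clear_value l
  convert key using 2
  · linear_combination -hmix
  · linear_combination hmix

theorem rect_mm_exponent_ineq (f : ℝ → ℝ → ℝ → ℝ)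
    (hhom : ∀ l a b c : ℝ, 0 ≤ l → 0 ≤ a → 0 ≤ b → 0 ≤ c →
      f (l * a) (l * b) (l * c) = l * f a b c)
    (hsub : ∀ a a' b b' c c' : ℝ, 0 ≤ a → 0 ≤ a' → 0 ≤ b → 0 ≤ b' → 0 ≤ c → 0 ≤ c' →
      f (a + a') (b + b') (c + c') ≤ f a b c + f a' b' c')
    (hswap12 : ∀ a b c : ℝ, 0 ≤ a → 0 ≤ b → 0 ≤ c → f a b c = f b a c)
    (hswap23 : ∀ a b c : ℝ, 0 ≤ a → 0 ≤ b → 0 ≤ c → f a b c = f a c b)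
    (α β γ : ℝ) (hα : α ∈ Set.Icc (0 : ℝ) 1) (hβ : β ∈ Set.Icc (0 : ℝ) 1)
    (hγ : γ ∈ Set.Icc (0 : ℝ) 1) (hβγ : 1 ≤ β + γ) :
    f α β γ ≤ f α 1 (β + γ - 1) :=
  rect_mm_exponent_ineq_general f hhom hsub hswap23 α β γ hα hβ hγ hβγ
end

section
/- (Isolating measurements in unbalanced expanders.) Let d ≥ 1 and K ≥ 1 be integers and ε ∈ [0, 1). Let G be a bipartite graph with finite left vertex set L and right vertex set R in which every left vertex has exactly d distinct neighbors, and suppose G is a (K, ε)-unbalanced expander: for every S ⊆ L with |S| ≤ K, the neighborhood satisfies |N(S)| ≥ (1 − ε)·d·|S|. Then for every X ⊆ L with |X| ≤ K, the number of right vertices r ∈ R having exactly one neighbor in X is at least (1 − 2ε)·d·|X|. -/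
/- Count incidences between `X` and `N(X)`: there are `d |X|` of them, every vertex of
`N(X)` carries at least one and every non-isolating one at least two, so
`2 |N(X)| - #isolating ≤ d |X|`. Expansion gives `|N(X)| ≥ (1 - ε) d |X|`, hence
`#isolating ≥ 2 (1 - ε) d |X| - d |X| = (1 - 2ε) d |X|`. -/

open Finset

section Incidence

variable {L V : Type*} [DecidableEq V] (X : Finset L) (N : L → Finset V)

theorem sum_card_filter_mem_biUnion_eq_sum_card :
    ∑ r ∈ X.biUnion N, #{l ∈ X | r ∈ N l} = ∑ l ∈ X, #(N l) := by
  refine (sum_card_bipartiteAbove_eq_sum_card_bipartiteBelow (s := X) (t := X.biUnion N)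
    (fun l r => r ∈ N l)).symm.trans (sum_congr rfl fun l hl => congrArg card ?_)
  exact filter_mem_eq_inter.trans (inter_eq_right.2 (subset_biUnion_of_mem N hl))

theorem two_mul_card_biUnion_le [Fintype V] :
    2 * #(X.biUnion N) ≤
      #{r | #{l ∈ X | r ∈ N l} = 1} + ∑ l ∈ X, #(N l) := by
  have hdeg_pos : ∀ r ∈ X.biUnion N, 1 ≤ #{l ∈ X | r ∈ N l} := fun r hr => by
    obtain ⟨l, hl, hrl⟩ := mem_biUnion.1 hr
    exact card_pos.2 ⟨l, mem_filter.2 ⟨hl, hrl⟩⟩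
  have hisolated : (univ.filter fun r => #{l ∈ X | r ∈ N l} = 1) =
      (X.biUnion N).filter fun r => #{l ∈ X | r ∈ N l} = 1 := by
    ext r
    simp only [mem_filter, mem_univ, true_and]
    refine ⟨fun h => ⟨?_, h⟩, And.right⟩
    obtain ⟨l, hl⟩ := card_eq_one.1 h
    have hmem : l ∈ X ∧ r ∈ N l := mem_filter.1 (hl ▸ mem_singleton_self l)
    exact mem_biUnion.2 ⟨l, hmem⟩
  rw [hisolated, card_filter, ← sum_card_filter_mem_biUnion_eq_sum_card, ← sum_add_distrib,
    mul_comm, ← smul_eq_mul, ← sum_const]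
  refine sum_le_sum fun r hr => ?_
  have hr_deg := hdeg_pos r hr
  split_ifs <;> omega

end Incidence

theorem expander_isolating_measurements_general {L V : Type*}
    [Fintype V] [DecidableEq V]
    (d K : ℕ) (ε : ℝ)
    (N : L → Finset V) (hreg : ∀ l : L, (N l).card = d)
    (hexp : ∀ S : Finset L, S.card ≤ K →
      (1 - ε) * d * S.card ≤ ((S.biUnion N).card : ℝ)) :
    ∀ X : Finset L, X.card ≤ K →
      (1 - 2 * ε) * d * X.card ≤
        ((Finset.univ.filter
          (fun r : V => (X.filter (fun l => r ∈ N l)).card = 1)).card : ℝ) := by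
  intro X hX
  have hcount := two_mul_card_biUnion_le X N
  simp only [hreg, sum_const, smul_eq_mul] at hcount
  have hcountR : 2 * (#(X.biUnion N) : ℝ) ≤
      #{r | #{l ∈ X | r ∈ N l} = 1} + #X * d := by
    exact_mod_cast hcount
  linarith [hexp X hX]

theorem expander_isolating_measurements {L V : Type*}
    [Fintype L] [Fintype V] [DecidableEq L] [DecidableEq V]
    (d K : ℕ) (hd : 1 ≤ d) (hK : 1 ≤ K) (ε : ℝ) (hε0 : 0 ≤ ε) (hε1 : ε < 1)
    (N : L → Finset V) (hreg : ∀ l : L, (N l).card = d)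
    (hexp : ∀ S : Finset L, S.card ≤ K →
      (1 - ε) * d * S.card ≤ ((S.biUnion N).card : ℝ)) :
    ∀ X : Finset L, X.card ≤ K →
      (1 - 2 * ε) * d * X.card ≤
        ((Finset.univ.filter
          (fun r : V => (X.filter (fun l => r ∈ N l)).card = 1)).card : ℝ) :=
  expander_isolating_measurements_general d K ε N hreg hexp
end

section
/- (Recovery of an isolated coordinate from one block of measurements.) Let R be a ring, ℓ ≥ 1, and n = 2^ℓ − 1. Let B be the ℓ×n matrix with entries in {0_R, 1_R} whose j-th column is the binary expansion of j (so that B_{k,j} = 1 if and only if the bit of j with place value 2^{ℓ−k} is 1). Let A be an m'×n matrix with entries in {0_R, 1_R}, and let H := A ⊗_r B be the row tensor Hadamard product of A and B. Suppose x ∈ Rⁿ, i ∈ {1,…,m'}, and j ∈ {1,…,n} satisfy: x_j ≠ 0, A_{i,j} = 1, and A_{i,l} = 0 for every l ≠ j with x_l ≠ 0 (i.e., the support of row i of A intersects the support of x exactly in {j}). Then for every k ∈ {1,…,ℓ}, the entry of Hx at index (i−1)ℓ + k equals x_j if B_{k,j} = 1 and equals 0 if B_{k,j} = 0. Consequently,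 j = Σ_{k : (Hx)_{(i−1)ℓ+k} ≠ 0} 2^{ℓ−k}, and x_j is the common value of all nonzero entries of this block. -/
/-! Row `i` of `A` sees only the coordinate `x j` of `x`, so the `(i, k)` entry of `H *ᵥ x` is
`B k j * x j`: it is `x j` exactly at the one-bits of the binary expansion of `j + 1`. Summing
the place values of those bits gives back `j + 1`. -/

open Matrix Finset

theorem Nat.sum_filter_range_testBit_two_pow {m ℓ : ℕ} (hm : m < 2 ^ ℓ) :
    ∑ i ∈ (range ℓ).filter (m.testBit ·), 2 ^ i = m := by
  have hbits : (range ℓ).filter (m.testBit ·) = m.bitIndices.toFinset := by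
    ext i
    simp only [mem_filter, mem_range, List.mem_toFinset, Nat.mem_bitIndices, and_iff_right_iff_imp]
    intro hi
    by_contra! h
    simp [Nat.testBit_eq_false_of_lt (hm.trans_le (Nat.pow_le_pow_right two_pos h))] at hi
  rw [hbits, Finset.sum_toFinset_bitIndices_two_pow]

theorem Nat.sum_filter_fin_testBit_two_pow_rev {m ℓ : ℕ} (hm : m < 2 ^ ℓ) :
    ∑ k ∈ univ.filter (fun k : Fin ℓ => m.testBit (ℓ - 1 - k)), 2 ^ (ℓ - 1 - (k : ℕ)) = m := by
  have hrev : ∀ k : Fin ℓ, ℓ - 1 - (k : ℕ) = (Fin.revPerm k : ℕ) := fun k => by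
    rw [Fin.revPerm_apply, Fin.val_rev]; omega
  simp only [hrev, sum_filter]
  rw [Equiv.sum_comp Fin.revPerm (fun k : Fin ℓ => if m.testBit k then 2 ^ (k : ℕ) else 0),
    Fin.sum_univ_eq_sum_range (fun k => if m.testBit k then 2 ^ k else 0),
    ← sum_filter, Nat.sum_filter_range_testBit_two_pow hm]

theorem dotProduct_eq_mul_of_isolated {ι R : Type*} [Fintype ι] [NonUnitalNonAssocSemiring R]
    {v x : ι → R} {j : ι} (h : ∀ l, l ≠ j → x l ≠ 0 → v l = 0) : v ⬝ᵥ x = v j * x j :=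
  Fintype.sum_eq_single j fun l hl => by
    by_cases hx : x l = 0
    · rw [hx, mul_zero]
    · rw [h l hl hx, zero_mul]

theorem mulVec_apply_of_isolated {m p ι R : Type*} [Fintype ι] [NonAssocSemiring R]
    {A : Matrix m ι R} {B : Matrix p ι R} {H : Matrix (m × p) ι R}
    (hH : ∀ i k l, H (i, k) l = A i l * B k l) {x : ι → R} {i : m} {j : ι}
    (hAij : A i j = 1) (hiso : ∀ l, l ≠ j → x l ≠ 0 → A i l = 0) (k : p) :
    (H *ᵥ x) (i, k) = B k j * x j := by
  rw [mulVec, dotProduct_eq_mul_of_isolated fun l hl hx => by rw [hH, hiso l hl hx, zero_mul],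
    hH, hAij, one_mul]

open Classical in
theorem isolated_coordinate_recovery_general {R : Type*} [Ring R] {ℓ m' : ℕ}
    {n : ℕ} (hn : n = 2 ^ ℓ - 1)
    (B : Matrix (Fin ℓ) (Fin n) R)
    (hB : ∀ (k : Fin ℓ) (j : Fin n),
      B k j = if Nat.testBit ((j : ℕ) + 1) (ℓ - 1 - (k : ℕ)) then 1 else 0)
    (A : Matrix (Fin m') (Fin n) R)
    (H : Matrix (Fin m' × Fin ℓ) (Fin n) R)
    (hH : ∀ (i : Fin m') (k : Fin ℓ) (j : Fin n), H (i, k) j = A i j * B k j)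
    (x : Fin n → R) (i : Fin m') (j : Fin n)
    (hxj : x j ≠ 0) (hAij : A i j = 1)
    (hiso : ∀ l : Fin n, l ≠ j → x l ≠ 0 → A i l = 0) :
    (∀ k : Fin ℓ, H.mulVec x (i, k) =
        if Nat.testBit ((j : ℕ) + 1) (ℓ - 1 - (k : ℕ)) then x j else 0) ∧
    (j : ℕ) + 1 =
      ∑ k ∈ Finset.univ.filter (fun k : Fin ℓ => H.mulVec x (i, k) ≠ 0),
        2 ^ (ℓ - 1 - (k : ℕ)) := by
  have hblock : ∀ k : Fin ℓ, H.mulVec x (i, k) =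
      if Nat.testBit ((j : ℕ) + 1) (ℓ - 1 - (k : ℕ)) then x j else 0 := fun k => by
    rw [mulVec_apply_of_isolated hH hAij hiso, hB, ite_mul, one_mul, zero_mul]
  refine ⟨hblock, ?_⟩
  have hsupport : univ.filter (fun k : Fin ℓ => H.mulVec x (i, k) ≠ 0) =
      univ.filter (fun k : Fin ℓ => Nat.testBit ((j : ℕ) + 1) (ℓ - 1 - (k : ℕ))) :=
    filter_congr fun k _ => by rw [hblock k, ite_ne_right_iff, and_iff_left hxj]
  have hj : (j : ℕ) + 1 < 2 ^ ℓ := by have := j.isLt; have := ℓ.one_le_two_pow; omega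
  rw [hsupport, Nat.sum_filter_fin_testBit_two_pow_rev hj]

open Classical in
theorem isolated_coordinate_recovery {R : Type*} [Ring R] {ℓ m' : ℕ}
    (hl : 1 ≤ ℓ) {n : ℕ} (hn : n = 2 ^ ℓ - 1)
    (B : Matrix (Fin ℓ) (Fin n) R)
    (hB : ∀ (k : Fin ℓ) (j : Fin n),
      B k j = if Nat.testBit ((j : ℕ) + 1) (ℓ - 1 - (k : ℕ)) then 1 else 0)
    (A : Matrix (Fin m') (Fin n) R)
    (hA01 : ∀ (i : Fin m') (j : Fin n), A i j = 0 ∨ A i j = 1)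
    (H : Matrix (Fin m' × Fin ℓ) (Fin n) R)
    (hH : ∀ (i : Fin m') (k : Fin ℓ) (j : Fin n), H (i, k) j = A i j * B k j)
    (x : Fin n → R) (i : Fin m') (j : Fin n)
    (hxj : x j ≠ 0) (hAij : A i j = 1)
    (hiso : ∀ l : Fin n, l ≠ j → x l ≠ 0 → A i l = 0) :
    (∀ k : Fin ℓ, H.mulVec x (i, k) =
        if Nat.testBit ((j : ℕ) + 1) (ℓ - 1 - (k : ℕ)) then x j else 0) ∧
    (j : ℕ) + 1 =
      ∑ k ∈ Finset.univ.filter (fun k : Fin ℓ => H.mulVec x (i, k) ≠ 0),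
        2 ^ (ℓ - 1 - (k : ℕ)) :=
  isolated_coordinate_recovery_general hn B hB A H hH x i j hxj hAij hiso
end

section
/- (From halving recovery to exact recovery.) Let R be a ring, let m, n, t ≥ 1 be integers, and let H be an m×n matrix over R. Suppose there exists a function Red : Rᵐ → Rⁿ such that for every vector x ∈ Rⁿ with ‖x‖₀ ≤ t, one has ‖x − Red(Hx)‖₀ ≤ ‖x‖₀ / 2. Then there exists a function Rec : Rᵐ → Rⁿ such that Rec(Hx) = x for every x ∈ Rⁿ with ‖x‖₀ ≤ t. -/
/-! Apply `Red` to the residual measurement `H (x - y)` again and again, adding up the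
outputs `y`. Each round at least halves the number of nonzero entries of the residual
`x - y`, so a `t`-sparse `x` is recovered exactly after `t` rounds since `t < 2 ^ t`. -/

theorem vecNnz_eq_zero_iff {R : Type*} [Zero R] {n : ℕ} {x : Fin n → R} :
    vecNnz x = 0 ↔ x = 0 := by
  simp [vecNnz, funext_iff]

section IterateRecovery

open Matrix

variable {R : Type*} [NonUnitalNonAssocRing R] {m n : ℕ}

def iterateRecovery (H : Matrix (Fin m) (Fin n) R) (Red : (Fin m → R) → Fin n → R) :
    ℕ → (Fin m → R) → Fin n → R
  | 0, _ => 0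
  | k + 1, z => Red z + iterateRecovery H Red k (z - H *ᵥ Red z)

theorem iterateRecovery_mulVec {t : ℕ} {H : Matrix (Fin m) (Fin n) R}
    {Red : (Fin m → R) → Fin n → R}
    (hRed : ∀ x : Fin n → R, vecNnz x ≤ t → vecNnz (x - Red (H *ᵥ x)) ≤ vecNnz x / 2)
    (k : ℕ) (x : Fin n → R) (hxt : vecNnz x ≤ t) (hxk : vecNnz x < 2 ^ k) :
    iterateRecovery H Red k (H *ᵥ x) = x := by
  induction k generalizing x with
  | zero =>
    rw [pow_zero, Nat.lt_one_iff, vecNnz_eq_zero_iff] at hxk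
    simp [iterateRecovery, hxk]
  | succ k ih =>
    set y := x - Red (H *ᵥ x) with hy
    have hy_half : vecNnz y ≤ vecNnz x / 2 := hRed x hxt
    have hyt : vecNnz y ≤ t := hy_half.trans ((Nat.div_le_self _ _).trans hxt)
    have hyk : vecNnz y < 2 ^ k := by rw [pow_succ] at hxk; omega
    have hHy : H *ᵥ y = H *ᵥ x - H *ᵥ Red (H *ᵥ x) := Matrix.mulVec_sub H _ _
    rw [iterateRecovery, ← hHy, ih y hyt hyk, hy, add_sub_cancel]

end IterateRecovery

theorem halving_to_exact_recovery_general {R : Type*} [Ring R] {m n t : ℕ}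
    (H : Matrix (Fin m) (Fin n) R) (Red : (Fin m → R) → (Fin n → R))
    (hRed : ∀ x : Fin n → R, vecNnz x ≤ t →
      vecNnz (x - Red (H.mulVec x)) ≤ vecNnz x / 2) :
    ∃ Rec : (Fin m → R) → (Fin n → R),
      ∀ x : Fin n → R, vecNnz x ≤ t → Rec (H.mulVec x) = x :=
  ⟨iterateRecovery H Red t, fun x hx =>
    iterateRecovery_mulVec hRed t x hx (hx.trans_lt Nat.lt_two_pow_self)⟩

theorem halving_to_exact_recovery {R : Type*} [Ring R] {m n t : ℕ}
    (hm : 1 ≤ m) (hn : 1 ≤ n) (ht : 1 ≤ t)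
    (H : Matrix (Fin m) (Fin n) R) (Red : (Fin m → R) → (Fin n → R))
    (hRed : ∀ x : Fin n → R, vecNnz x ≤ t →
      vecNnz (x - Red (H.mulVec x)) ≤ vecNnz x / 2) :
    ∃ Rec : (Fin m → R) → (Fin n → R),
      ∀ x : Fin n → R, vecNnz x ≤ t → Rec (H.mulVec x) = x :=
  halving_to_exact_recovery_general H Red hRed
end

section
/- (Halving sparse recovery from an unbalanced expander — Reduce lemma.) Let R be a ring, ℓ ≥ 1, n = 2^ℓ − 1, and let t, d, m' ≥ 1 be integers. Let A be the m'×n adjacency matrix (with entries in {0_R, 1_R}) of a d-left-regular bipartite graph with left vertex set [n] and right vertex set [m'] that is a (t, 1/12)-unbalanced expander. Let B be the ℓ×n matrix with entries in {0_R, 1_R} whose j-th column is the binary expansion of j, and let H := A ⊗_r B ∈ R^{(m'ℓ)×n} be their row tensor Hadamard product. Then there exists a function Red : R^{m'ℓ} → Rⁿ such that for every vector x ∈ Rⁿ with ‖x‖₀ ≤ t, one has ‖x − Red(Hx)‖₀ ≤ ‖x‖₀ / 2. -/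
open Matrix

/-!
The `ℓ` entries `(H x) (i, ·)` at a right vertex `i` are the sum, over the neighbours `j` of `i` in
the support `S` of `x`, of `x j` times the binary expansion of `j + 1`. So a vertex with exactly one
such neighbour `j` reads off the pair `(j, x j)`, and a vertex with none reads off nothing. `Red`
lets every right vertex vote in this way and sets `z j := v` when a strict majority of the
neighbours of `j` vote for `(j, v)`. Only vertices with at least two neighbours in `S` can vote
wrongly, and expansion bounds the edges from `S` into them by `d|S|/6` and their number by
`d|S|/12`. A misdecoded `j ∈ S` owns at least `d/2` of those edges, so there are at most `|S|/3`
of them; a spurious `j ∉ S` needs more than `d/2` wrong votes, each cast by a different vertex, so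
there are at most `|S|/6` of them.
-/

open Finset

section Support

variable {ι R : Type*} [Fintype ι] [Zero R]

open Classical in
noncomputable def supp (x : ι → R) : Finset ι := {j | x j ≠ 0}

@[simp] lemma mem_supp {x : ι → R} {j : ι} : j ∈ supp x ↔ x j ≠ 0 := by
  simp [supp]

end Support

section BinaryCode

def binaryCode (ℓ n : ℕ) (j : Fin n) (k : Fin ℓ) : Bool :=
  Nat.testBit ((j : ℕ) + 1) (ℓ - 1 - (k : ℕ))

variable {ℓ n : ℕ}

lemma eq_of_testBit_rev_eq {a b : ℕ} (ha : a < 2 ^ ℓ) (hb : b < 2 ^ ℓ)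
    (h : ∀ k : Fin ℓ, a.testBit (ℓ - 1 - k) = b.testBit (ℓ - 1 - k)) : a = b := by
  refine Nat.eq_of_testBit_eq fun p => ?_
  by_cases hp : p < ℓ
  · simpa [show ℓ - 1 - (ℓ - 1 - p) = p by omega] using h ⟨ℓ - 1 - p, by omega⟩
  · have hℓp : 2 ^ ℓ ≤ 2 ^ p := Nat.pow_le_pow_right two_pos (by omega)
    rw [Nat.testBit_eq_false_of_lt (ha.trans_le hℓp), Nat.testBit_eq_false_of_lt (hb.trans_le hℓp)]

lemma binaryCode_injective (hn : n < 2 ^ ℓ) : Function.Injective (binaryCode ℓ n) := by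
  intro j j' h
  have := eq_of_testBit_rev_eq (by omega) (by omega) fun k => congrFun h k
  exact Fin.ext (by omega)

lemma exists_binaryCode (hn : n < 2 ^ ℓ) (j : Fin n) : ∃ k, binaryCode ℓ n j k = true := by
  obtain ⟨p, hp⟩ := Nat.exists_testBit_of_ne_zero (Nat.succ_ne_zero j)
  have hpℓ : p < ℓ := by
    by_contra! hle
    have : (j : ℕ) + 1 < 2 ^ p := by
      have := Nat.pow_le_pow_right two_pos hle; omega
    simp [Nat.testBit_eq_false_of_lt this] at hp
  exact ⟨⟨ℓ - 1 - p, by omega⟩, by simpa [binaryCode, show ℓ - 1 - (ℓ - 1 - p) = p by omega]⟩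

end BinaryCode

section ScaledCodeword

variable {ι K R : Type*} [Zero R] {code : ι → K → Bool}

variable (code) in
def scaledCodeword (j : ι) (v : R) : K → R := fun k => if code j k then v else 0

open Classical in
variable (code) in
noncomputable def decodeScaled (y : K → R) : Option (ι × R) :=
  if h : ∃ p : ι × R, p.2 ≠ 0 ∧ scaledCodeword code p.1 p.2 = y then some h.choose else none

lemma eq_and_eq_of_scaledCodeword_eq (hinj : Function.Injective code)
    (hne : ∀ j, ∃ k, code j k = true) {j j' : ι} {v v' : R} (hv : v ≠ 0) (hv' : v' ≠ 0)
    (h : scaledCodeword code j v = scaledCodeword code j' v') : j = j' ∧ v = v' := by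
  have hsame : code j = code j' := funext fun k => by
    have := congrFun h k
    cases hj : code j k <;> cases hj' : code j' k <;> simp_all [scaledCodeword]
  obtain rfl := hinj hsame
  obtain ⟨k, hk⟩ := hne j
  simpa [scaledCodeword, hk] using congrFun h k

lemma decodeScaled_scaledCodeword (hinj : Function.Injective code)
    (hne : ∀ j, ∃ k, code j k = true) {j : ι} {v : R} (hv : v ≠ 0) :
    decodeScaled code (scaledCodeword code j v) = some (j, v) := by
  have h : ∃ p : ι × R, p.2 ≠ 0 ∧ scaledCodeword code p.1 p.2 = scaledCodeword code j v :=
    ⟨(j, v), hv, rfl⟩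
  obtain ⟨hj, hv⟩ := eq_and_eq_of_scaledCodeword_eq hinj hne h.choose_spec.1 hv h.choose_spec.2
  rw [decodeScaled, dif_pos h]
  exact congrArg some (Prod.ext hj hv)

lemma decodeScaled_zero (hne : ∀ j, ∃ k, code j k = true) :
    decodeScaled code (0 : K → R) = none := by
  refine dif_neg ?_
  rintro ⟨⟨j, v⟩, hv, h⟩
  obtain ⟨k, hk⟩ := hne j
  exact hv (by simpa [scaledCodeword, hk] using congrFun h k)

end ScaledCodeword

section MultiNbrs

variable {ι κ : Type*} [DecidableEq κ] (nbrs : ι → Finset κ) (S : Finset ι)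

lemma sum_card_filter_mem_comm (T : Finset κ) :
    ∑ j ∈ S, #{i ∈ T | i ∈ nbrs j} = ∑ i ∈ T, #{j ∈ S | i ∈ nbrs j} :=
  sum_card_bipartiteAbove_eq_sum_card_bipartiteBelow _

variable [Fintype κ]

def multiNbrs : Finset κ := {i | 2 ≤ #{j ∈ S | i ∈ nbrs j}}

variable {nbrs S} in
lemma card_filter_le_one_of_not_mem_multiNbrs {i : κ} (hi : i ∉ multiNbrs nbrs S) :
    #{j ∈ S | i ∈ nbrs j} ≤ 1 := by
  simpa [multiNbrs, Nat.lt_succ_iff] using hi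

lemma two_mul_card_multiNbrs_le :
    2 * #(multiNbrs nbrs S) ≤ ∑ j ∈ S, #{i ∈ multiNbrs nbrs S | i ∈ nbrs j} := by
  rw [sum_card_filter_mem_comm, mul_comm, ← smul_eq_mul]
  exact card_nsmul_le_sum _ _ _ fun i hi => by simpa [multiNbrs] using hi

/-- Pointwise: a right vertex with `k` neighbours in `S` contributes `2 * min k 1` plus
(`k` if `k ≥ 2`) on the left and `2 * k` on the right. -/
lemma two_mul_card_biUnion_add_le :
    2 * #(S.biUnion nbrs) + ∑ j ∈ S, #{i ∈ multiNbrs nbrs S | i ∈ nbrs j} ≤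
      2 * ∑ j ∈ S, #(nbrs j) := by
  have hN : S.biUnion nbrs = ({i | 0 < #{j ∈ S | i ∈ nbrs j}} : Finset κ) := by
    ext i; simp [card_pos, Finset.Nonempty]
  have hdeg : ∑ j ∈ S, #(nbrs j) = ∑ i, #{j ∈ S | i ∈ nbrs j} := by
    simp [← sum_card_filter_mem_comm]
  rw [sum_card_filter_mem_comm, hN, hdeg, card_filter, multiNbrs, sum_filter, mul_sum, mul_sum,
    ← sum_add_distrib]
  refine sum_le_sum fun i _ => ?_
  split_ifs <;> omega

end MultiNbrs

lemma two_mul_add_le_of_expansion {d s N M e a b : ℕ} (hd : 0 < d) (hexp : 11 * d * s ≤ 12 * N)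
    (hedges : 2 * N + e ≤ 2 * (d * s)) (hM : 2 * M ≤ e) (ha : d * a ≤ 2 * e)
    (hb : (d + 1) * b ≤ 2 * M) : 2 * (a + b) ≤ s := by
  have he : 6 * e ≤ d * s := by nlinarith
  have ha' : 3 * a ≤ s := le_of_mul_le_mul_left (by nlinarith) hd
  have hb' : 6 * b ≤ s := le_of_mul_le_mul_left (by nlinarith) hd
  omega

section MajorityDecode

open Classical

variable {ι κ R : Type*} [Zero R] (nbrs : ι → Finset κ)

noncomputable def majorityDecode (vote : κ → Option (ι × R)) (j : ι) : R :=
  if h : ∃ v ≠ 0, #(nbrs j) < 2 * #{i ∈ nbrs j | vote i = some (j, v)} then h.choose else 0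

variable {nbrs} {vote : κ → Option (ι × R)} {j : ι}

lemma majorityDecode_spec (h : ∃ v ≠ 0, #(nbrs j) < 2 * #{i ∈ nbrs j | vote i = some (j, v)}) :
    #(nbrs j) < 2 * #{i ∈ nbrs j | vote i = some (j, majorityDecode nbrs vote j)} := by
  rw [majorityDecode, dif_pos h]
  exact h.choose_spec.2

lemma majorityDecode_eq_zero
    (h : ¬∃ v ≠ 0, #(nbrs j) < 2 * #{i ∈ nbrs j | vote i = some (j, v)}) :
    majorityDecode nbrs vote j = 0 :=
  dif_neg h

variable [Fintype ι] [DecidableEq κ]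

variable (nbrs) in
structure IsUniqueNeighbourVote (x : ι → R) (vote : κ → Option (ι × R)) : Prop where
  eq_some : ∀ i j, {j' ∈ supp x | i ∈ nbrs j'} = {j} → vote i = some (j, x j)
  eq_none : ∀ i, {j ∈ supp x | i ∈ nbrs j} = ∅ → vote i = none

namespace IsUniqueNeighbourVote

variable [Fintype κ] {x : ι → R} {i : κ}

lemma eq_some_of_not_mem_multiNbrs (hvote : IsUniqueNeighbourVote nbrs x vote)
    (hi : i ∉ multiNbrs nbrs (supp x)) (hj : j ∈ supp x) (hij : i ∈ nbrs j) :
    vote i = some (j, x j) := by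
  refine hvote.eq_some i j (eq_singleton_iff_unique_mem.2 ⟨mem_filter.2 ⟨hj, hij⟩, ?_⟩)
  exact fun j' hj' => card_le_one_iff.1 (card_filter_le_one_of_not_mem_multiNbrs hi) hj'
    (mem_filter.2 ⟨hj, hij⟩)

lemma mem_multiNbrs_of_eq_some (hvote : IsUniqueNeighbourVote nbrs x vote) {v : R}
    (h : vote i = some (j, v)) (hbad : j ∉ supp x ∨ v ≠ x j) :
    i ∈ multiNbrs nbrs (supp x) := by
  by_contra hi
  obtain ⟨j', hj'⟩ : ({j ∈ supp x | i ∈ nbrs j} : Finset ι).Nonempty := by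
    rw [nonempty_iff_ne_empty]
    exact fun h0 => by simp [hvote.eq_none i h0] at h
  obtain ⟨hj'S, hij'⟩ := mem_filter.1 hj'
  rw [hvote.eq_some_of_not_mem_multiNbrs hi hj'S hij'] at h
  obtain ⟨rfl, rfl⟩ := Prod.mk.inj (Option.some.inj h)
  tauto

lemma card_le_two_mul_card_multiNbrs (hvote : IsUniqueNeighbourVote nbrs x vote)
    (hj : j ∈ supp x) (hz : majorityDecode nbrs vote j ≠ x j) :
    #(nbrs j) ≤ 2 * #{i ∈ multiNbrs nbrs (supp x) | i ∈ nbrs j} := by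
  set M := multiNbrs nbrs (supp x)
  have hcomm : ({i ∈ M | i ∈ nbrs j} : Finset κ) = {i ∈ nbrs j | i ∈ M} := by
    ext; simp [and_comm]
  rw [hcomm]
  by_cases hmaj : ∃ v ≠ 0, #(nbrs j) < 2 * #{i ∈ nbrs j | vote i = some (j, v)}
  · have hwrong : {i ∈ nbrs j | vote i = some (j, majorityDecode nbrs vote j)} ⊆
        {i ∈ nbrs j | i ∈ M} := fun i hi =>
      mem_filter.2 ⟨(mem_filter.1 hi).1,
        hvote.mem_multiNbrs_of_eq_some (mem_filter.1 hi).2 (Or.inr hz)⟩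
    have := majorityDecode_spec hmaj
    have := card_le_card hwrong
    omega
  · push Not at hmaj
    have hright : {i ∈ nbrs j | i ∉ M} ⊆ {i ∈ nbrs j | vote i = some (j, x j)} := fun i hi =>
      mem_filter.2 ⟨(mem_filter.1 hi).1,
        hvote.eq_some_of_not_mem_multiNbrs (mem_filter.1 hi).2 hj (mem_filter.1 hi).1⟩
    have := hmaj (x j) (mem_supp.1 hj)
    have := card_le_card hright
    have := card_filter_add_card_filter_not (s := nbrs j) (· ∈ M)
    omega

lemma add_one_mul_card_spurious_le (hvote : IsUniqueNeighbourVote nbrs x vote) {d : ℕ}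
    (hreg : ∀ j, #(nbrs j) = d) :
    (d + 1) * #{j | j ∉ supp x ∧ majorityDecode nbrs vote j ≠ 0} ≤
      2 * #(multiNbrs nbrs (supp x)) := by
  have key := card_mul_le_card_mul (fun j i => ∃ v, vote i = some (j, v))
    (s := {j | j ∉ supp x ∧ majorityDecode nbrs vote j ≠ 0}) (t := multiNbrs nbrs (supp x))
    (m := d / 2 + 1) (n := 1) ?_ ?_
  · nlinarith [Nat.lt_succ_iff.1 (Nat.lt_div_mul_add (a := d) two_pos)]
  · intro j hj
    obtain ⟨hjS, hz⟩ := (mem_filter.1 hj).2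
    have hmaj : ∃ v ≠ 0, #(nbrs j) < 2 * #{i ∈ nbrs j | vote i = some (j, v)} := by
      by_contra h
      exact hz (majorityDecode_eq_zero h)
    have hvoters : {i ∈ nbrs j | vote i = some (j, majorityDecode nbrs vote j)} ⊆
        (multiNbrs nbrs (supp x)).bipartiteAbove (fun j i => ∃ v, vote i = some (j, v)) j :=
      fun i hi => mem_filter.2 ⟨hvote.mem_multiNbrs_of_eq_some (mem_filter.1 hi).2 (Or.inl hjS),
        _, (mem_filter.1 hi).2⟩
    have hmajority := majorityDecode_spec hmaj
    rw [hreg] at hmajority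
    have := card_le_card hvoters
    omega
  · intro i _
    refine card_le_one_iff.2 fun h₁ h₂ => ?_
    obtain ⟨v₁, h₁⟩ := (mem_bipartiteBelow _).1 h₁ |>.2
    obtain ⟨v₂, h₂⟩ := (mem_bipartiteBelow _).1 h₂ |>.2
    exact (Prod.mk.inj (Option.some.inj (h₁.symm.trans h₂))).1

theorem two_mul_card_majorityDecode_ne_le (hvote : IsUniqueNeighbourVote nbrs x vote) {d : ℕ}
    (hd : 0 < d) (hreg : ∀ j, #(nbrs j) = d)
    (hexp : 11 * d * #(supp x) ≤ 12 * #((supp x).biUnion nbrs)) :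
    2 * #{j | majorityDecode nbrs vote j ≠ x j} ≤ #(supp x) := by
  set S := supp x
  set M := multiNbrs nbrs S
  set z := majorityDecode nbrs vote
  have hdeg : ∑ j ∈ S, #(nbrs j) = d * #S := by simp [hreg, mul_comm]
  have hedges : 2 * #(S.biUnion nbrs) + ∑ j ∈ S, #{i ∈ M | i ∈ nbrs j} ≤ 2 * (d * #S) :=
    hdeg ▸ two_mul_card_biUnion_add_le nbrs S
  have hmulti : 2 * #M ≤ ∑ j ∈ S, #{i ∈ M | i ∈ nbrs j} := two_mul_card_multiNbrs_le nbrs S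
  have houtside : (d + 1) * #{j | j ∉ S ∧ z j ≠ 0} ≤ 2 * #M :=
    hvote.add_one_mul_card_spurious_le hreg
  have hinside : d * #{j ∈ S | z j ≠ x j} ≤ 2 * ∑ j ∈ S, #{i ∈ M | i ∈ nbrs j} :=
    calc d * #{j ∈ S | z j ≠ x j} = ∑ j ∈ S with z j ≠ x j, #(nbrs j) := by
          simp [hreg, mul_comm]
      _ ≤ ∑ j ∈ S with z j ≠ x j, 2 * #{i ∈ M | i ∈ nbrs j} := sum_le_sum fun j hj =>
          hvote.card_le_two_mul_card_multiNbrs (mem_filter.1 hj).1 (mem_filter.1 hj).2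
      _ ≤ 2 * ∑ j ∈ S, #{i ∈ M | i ∈ nbrs j} := by
          rw [mul_sum]
          exact sum_le_sum_of_subset (filter_subset _ _)
  have hsplit : #{j | z j ≠ x j} ≤ #{j ∈ S | z j ≠ x j} + #{j | j ∉ S ∧ z j ≠ 0} := by
    refine (card_le_card fun j hj => ?_).trans (card_union_le _ _)
    by_cases hjS : j ∈ S <;> simp_all [S]
  have := two_mul_add_le_of_expansion hd hexp hedges hmulti hinside houtside
  omega

end IsUniqueNeighbourVote

end MajorityDecode

section CodedAdjacency

variable {ι κ K R : Type*} [Fintype ι] [DecidableEq κ]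

/-- The row tensor Hadamard product `A ⊗_r B` of the adjacency matrix `A` of `nbrs` and the 0/1
matrix `B` whose `j`-th column is `code j`. -/
def codedAdjacency [Zero R] [One R] (nbrs : ι → Finset κ) (code : ι → K → Bool) :
    Matrix (κ × K) ι R :=
  Matrix.of fun p j => if p.1 ∈ nbrs j ∧ code j p.2 then 1 else 0

noncomputable def rowVote [Zero R] (code : ι → K → Bool) (w : κ × K → R) (i : κ) :
    Option (ι × R) :=
  decodeScaled code fun k => w (i, k)

variable [NonAssocSemiring R] {nbrs : ι → Finset κ} {code : ι → K → Bool}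

lemma codedAdjacency_mulVec_row (x : ι → R) (i : κ) :
    (fun k => (codedAdjacency nbrs code *ᵥ x) (i, k)) =
      ∑ j ∈ supp x with i ∈ nbrs j, scaledCodeword code j (x j) := by
  ext k
  rw [Finset.sum_apply, sum_filter, mulVec, dotProduct, ← sum_subset (subset_univ (supp x))]
  · refine sum_congr rfl fun j _ => ?_
    by_cases hij : i ∈ nbrs j <;> by_cases hk : code j k <;>
      simp [codedAdjacency, scaledCodeword, hij, hk]
  · intro j _ hj
    simp [by simpa using hj]

lemma isUniqueNeighbourVote_rowVote (hinj : Function.Injective code)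
    (hne : ∀ j, ∃ k, code j k = true) (x : ι → R) :
    IsUniqueNeighbourVote nbrs x (rowVote code (codedAdjacency nbrs code *ᵥ x)) where
  eq_some i j h := by
    have hj : x j ≠ 0 := mem_supp.1 (mem_filter.1 (h ▸ mem_singleton_self j)).1
    rw [rowVote, codedAdjacency_mulVec_row, h, sum_singleton,
      decodeScaled_scaledCodeword hinj hne hj]
  eq_none i h := by
    rw [rowVote, codedAdjacency_mulVec_row, h, sum_empty, decodeScaled_zero hne]

end CodedAdjacency

open Classical in
theorem expander_halving_recovery_general {R : Type*} [Ring R] {ℓ m' t d : ℕ}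
    (hd : 1 ≤ d)
    {n : ℕ} (hn : n = 2 ^ ℓ - 1)
    (nbrs : Fin n → Finset (Fin m')) (hreg : ∀ j, (nbrs j).card = d)
    (hexp : ∀ S : Finset (Fin n), S.card ≤ t →
      (1 - 1 / 12 : ℝ) * d * S.card ≤ ((S.biUnion nbrs).card : ℝ))
    (A : Matrix (Fin m') (Fin n) R)
    (hA : ∀ (i : Fin m') (j : Fin n), A i j = if i ∈ nbrs j then 1 else 0)
    (B : Matrix (Fin ℓ) (Fin n) R)
    (hB : ∀ (k : Fin ℓ) (j : Fin n),
      B k j = if Nat.testBit ((j : ℕ) + 1) (ℓ - 1 - (k : ℕ)) then 1 else 0)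
    (H : Matrix (Fin m' × Fin ℓ) (Fin n) R)
    (hH : ∀ (i : Fin m') (k : Fin ℓ) (j : Fin n), H (i, k) j = A i j * B k j) :
    ∃ Red : (Fin m' × Fin ℓ → R) → (Fin n → R),
      ∀ x : Fin n → R, vecNnz x ≤ t →
        vecNnz (x - Red (H.mulVec x)) ≤ vecNnz x / 2 := by
  have hn' : n < 2 ^ ℓ := by have := Nat.one_le_two_pow (n := ℓ); omega
  have hH' : H = codedAdjacency nbrs (binaryCode ℓ n) := by
    ext ⟨i, k⟩ j
    by_cases hij : i ∈ nbrs j <;> simp [hH, hA, hB, hij, codedAdjacency, binaryCode]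
  refine ⟨fun w => majorityDecode nbrs (rowVote (binaryCode ℓ n) w), fun x hx => ?_⟩
  have hvote := hH' ▸ isUniqueNeighbourVote_rowVote (nbrs := nbrs) (binaryCode_injective hn')
    (exists_binaryCode hn') x
  have hexp' : 11 * d * #(supp x) ≤ 12 * #((supp x).biUnion nbrs) := by
    have hreal := hexp (supp x) hx
    have : ((11 * d * #(supp x) : ℕ) : ℝ) ≤ (12 * #((supp x).biUnion nbrs) : ℕ) := by
      push_cast
      linarith
    exact_mod_cast this
  have hhalf := hvote.two_mul_card_majorityDecode_ne_le hd hreg hexp'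
  have herr : vecNnz (x - majorityDecode nbrs (rowVote (binaryCode ℓ n) (H *ᵥ x))) =
      #{j | majorityDecode nbrs (rowVote (binaryCode ℓ n) (H *ᵥ x)) j ≠ x j} := by
    simp [vecNnz, sub_eq_zero, eq_comm]
  rw [herr, Nat.le_div_iff_mul_le two_pos]
  exact (mul_comm _ _).trans_le hhalf

open Classical in
theorem expander_halving_recovery {R : Type*} [Ring R] {ℓ m' t d : ℕ}
    (hl : 1 ≤ ℓ) (ht : 1 ≤ t) (hd : 1 ≤ d) (hm' : 1 ≤ m')
    {n : ℕ} (hn : n = 2 ^ ℓ - 1)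
    (nbrs : Fin n → Finset (Fin m')) (hreg : ∀ j, (nbrs j).card = d)
    (hexp : ∀ S : Finset (Fin n), S.card ≤ t →
      (1 - 1 / 12 : ℝ) * d * S.card ≤ ((S.biUnion nbrs).card : ℝ))
    (A : Matrix (Fin m') (Fin n) R)
    (hA : ∀ (i : Fin m') (j : Fin n), A i j = if i ∈ nbrs j then 1 else 0)
    (B : Matrix (Fin ℓ) (Fin n) R)
    (hB : ∀ (k : Fin ℓ) (j : Fin n),
      B k j = if Nat.testBit ((j : ℕ) + 1) (ℓ - 1 - (k : ℕ)) then 1 else 0)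
    (H : Matrix (Fin m' × Fin ℓ) (Fin n) R)
    (hH : ∀ (i : Fin m') (k : Fin ℓ) (j : Fin n), H (i, k) j = A i j * B k j) :
    ∃ Red : (Fin m' × Fin ℓ → R) → (Fin n → R),
      ∀ x : Fin n → R, vecNnz x ≤ t →
        vecNnz (x - Red (H.mulVec x)) ≤ vecNnz x / 2 :=
  expander_halving_recovery_general hd hn nbrs hreg hexp A hA B hB H hH
end
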